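/- Let K be a finite simplicial complex containing the triangles {a,b,c} and {a,b,d} (with a,b,c,d distinct), such that {a,b,c} and {a,b,d} are the only faces of K properly containing the edge {a,b}, and such that {c,d} is not a face of K. Then K' = (K \ {{a,b},{a,b,c},{a,b,d}}) ∪ {{c,d},{a,c,d},{b,c,d}} is a simplicial complex with the same f-vector as K, i.e., for every i the number of i-dimensional faces of K' equals that of K. -/
import Mathlib


/-- A finite abstract simplicial complex: a finite collection of finite nonempty sets
closed under taking nonempty subsets. -/
def IsSimplicialComplex (K : Finset (Finset ℕ)) : Prop :=
  (∀ F ∈ K, F.Nonempty) ∧ ∀ F ∈ K, ∀ G : Finset ℕ, G ⊆ F → G.Nonempty → G ∈ K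

/-- Euler characteristic of a finite simplicial complex. -/
def eulerChar (K : Finset (Finset ℕ)) : ℤ :=
  ∑ F ∈ K, (-1 : ℤ) ^ (F.card - 1)

/-- Number of `i`-dimensional faces (faces with `i+1` elements). -/
def fVec (K : Finset (Finset ℕ)) (i : ℕ) : ℕ :=
  (K.filter (fun F => F.card = i + 1)).card

theorem bistellar_edge_flip_preserves_f_vector
    (K : Finset (Finset ℕ)) (hK : IsSimplicialComplex K)
    (a b c d : ℕ) (hab : a ≠ b) (hac : a ≠ c) (had : a ≠ d)
    (hbc : b ≠ c) (hbd : b ≠ d) (hcd : c ≠ d)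
    (habc : ({a, b, c} : Finset ℕ) ∈ K) (habd : ({a, b, d} : Finset ℕ) ∈ K)
    (honly : ∀ ρ ∈ K, ({a, b} : Finset ℕ) ⊂ ρ →
      ρ = ({a, b, c} : Finset ℕ) ∨ ρ = ({a, b, d} : Finset ℕ))
    (hnew : ({c, d} : Finset ℕ) ∉ K) :
    IsSimplicialComplex
      ((K \ {{a, b}, {a, b, c}, {a, b, d}}) ∪ {{c, d}, {a, c, d}, {b, c, d}}) ∧
    ∀ i : ℕ,
      fVec ((K \ {{a, b}, {a, b, c}, {a, b, d}}) ∪ {{c, d}, {a, c, d}, {b, c, d}}) i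
        = fVec K i := by
  obtain ⟨hne, hcl⟩ := hK
  have habK : ({a, b} : Finset ℕ) ∈ K := by
    refine hcl _ habc _ ?_ ⟨a, by simp⟩
    intro x hx; simp at hx ⊢; tauto
  have hacdK : ({a, c, d} : Finset ℕ) ∉ K := by
    intro h
    refine hnew (hcl _ h {c, d} ?_ ⟨c, by simp⟩)
    intro x hx; simp at hx ⊢; tauto
  have hbcdK : ({b, c, d} : Finset ℕ) ∉ K := by
    intro h
    refine hnew (hcl _ h {c, d} ?_ ⟨c, by simp⟩)
    intro x hx; simp at hx ⊢; tauto
  constructor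
  · constructor
    · intro F hF
      simp only [Finset.mem_union, Finset.mem_sdiff, Finset.mem_insert,
        Finset.mem_singleton] at hF
      rcases hF with ⟨hFK, _⟩ | rfl | rfl | rfl
      · exact hne F hFK
      · exact ⟨c, by simp⟩
      · exact ⟨c, by simp⟩
      · exact ⟨c, by simp⟩
    · intro F hF G hGF hGne
      simp only [Finset.mem_union, Finset.mem_sdiff, Finset.mem_insert,
        Finset.mem_singleton] at hF ⊢
      rcases hF with ⟨hFK, hFS⟩ | rfl | rfl | rfl
      · -- F ∈ K \ S
        left
        refine ⟨hcl _ hFK _ hGF hGne, ?_⟩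
        have key : a ∈ G → b ∈ G → False := by
          intro haG hbG
          have hss : ({a, b} : Finset ℕ) ⊆ F := by
            intro x hx; simp at hx; rcases hx with rfl | rfl
            · exact hGF haG
            · exact hGF hbG
          rcases hss.eq_or_ssubset with heq | hlt
          · exact hFS (Or.inl heq.symm)
          · rcases honly F hFK hlt with rfl | rfl <;> simp at hFS
        rintro (rfl | rfl | rfl)
        · exact key (by simp) (by simp)
        · exact key (by simp) (by simp)
        · exact key (by simp) (by simp)
      · -- F = {c, d}
        have hbG : b ∉ G := by
          intro h; have := hGF h; simp at this; omega
        by_cases hd' : d ∈ G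
        · by_cases hc' : c ∈ G
          · right; left
            apply Finset.Subset.antisymm hGF
            intro x hx; simp at hx; rcases hx with rfl | rfl <;> assumption
          · -- G ⊆ {a,b,d}
            left
            constructor
            · refine hcl _ habd _ ?_ hGne
              intro x hx; have := hGF hx; simp at this ⊢
              rcases this with rfl | rfl
              · exact absurd hx hc'
              · tauto
            · rintro (rfl | rfl | rfl) <;> exact hbG (by simp)
        · -- G ⊆ {a,b,c}
          left
          constructor
          · refine hcl _ habc _ ?_ hGne
            intro x hx; have := hGF hx; simp at this ⊢
            rcases this with rfl | rfl
            · tauto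
            · exact absurd hx hd'
          · rintro (rfl | rfl | rfl) <;> exact hbG (by simp)
      · -- F = {a, c, d}
        have hbG : b ∉ G := by
          intro h; have := hGF h; simp at this; omega
        by_cases hd' : d ∈ G
        · by_cases hc' : c ∈ G
          · by_cases ha' : a ∈ G
            · right; right; left
              apply Finset.Subset.antisymm hGF
              intro x hx; simp at hx; rcases hx with rfl | rfl | rfl <;> assumption
            · right; left
              apply Finset.Subset.antisymm
              · intro x hx; have := hGF hx; simp at this ⊢
                rcases this with rfl | rfl | rfl
                · exact absurd hx ha'
                · tauto
                · tauto
              · intro x hx; simp at hx; rcases hx with rfl | rfl <;> assumption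
          · -- G ⊆ {a,b,d}
            left
            constructor
            · refine hcl _ habd _ ?_ hGne
              intro x hx; have := hGF hx; simp at this ⊢
              rcases this with rfl | rfl | rfl
              · tauto
              · exact absurd hx hc'
              · tauto
            · rintro (rfl | rfl | rfl) <;> exact hbG (by simp)
        · -- G ⊆ {a,b,c}
          left
          constructor
          · refine hcl _ habc _ ?_ hGne
            intro x hx; have := hGF hx; simp at this ⊢
            rcases this with rfl | rfl | rfl
            · tauto
            · tauto
            · exact absurd hx hd'
          · rintro (rfl | rfl | rfl) <;> exact hbG (by simp)
      · -- F = {b, c, d}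
        have haG : a ∉ G := by
          intro h; have := hGF h; simp at this; omega
        by_cases hd' : d ∈ G
        · by_cases hc' : c ∈ G
          · by_cases hb' : b ∈ G
            · right; right; right
              apply Finset.Subset.antisymm hGF
              intro x hx; simp at hx; rcases hx with rfl | rfl | rfl <;> assumption
            · right; left
              apply Finset.Subset.antisymm
              · intro x hx; have := hGF hx; simp at this ⊢
                rcases this with rfl | rfl | rfl
                · exact absurd hx hb'
                · tauto
                · tauto
              · intro x hx; simp at hx; rcases hx with rfl | rfl <;> assumption
          · -- G ⊆ {a,b,d}
            left
            constructor
            · refine hcl _ habd _ ?_ hGne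
              intro x hx; have := hGF hx; simp at this ⊢
              rcases this with rfl | rfl | rfl
              · tauto
              · exact absurd hx hc'
              · tauto
            · rintro (rfl | rfl | rfl) <;> exact haG (by simp)
        · -- G ⊆ {a,b,c}
          left
          constructor
          · refine hcl _ habc _ ?_ hGne
            intro x hx; have := hGF hx; simp at this ⊢
            rcases this with rfl | rfl | rfl
            · tauto
            · tauto
            · exact absurd hx hd'
          · rintro (rfl | rfl | rfl) <;> exact haG (by simp)
  · -- f-vector
    intro i
    have c1 : ({a, b} : Finset ℕ).card = 2 := by
      rw [Finset.card_insert_of_notMem (by simp [hab]), Finset.card_singleton]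
    have c2 : ({a, b, c} : Finset ℕ).card = 3 := by
      rw [Finset.card_insert_of_notMem (by simp [hab, hac]),
        Finset.card_insert_of_notMem (by simp [hbc]), Finset.card_singleton]
    have c3 : ({a, b, d} : Finset ℕ).card = 3 := by
      rw [Finset.card_insert_of_notMem (by simp [hab, had]),
        Finset.card_insert_of_notMem (by simp [hbd]), Finset.card_singleton]
    have c4 : ({c, d} : Finset ℕ).card = 2 := by
      rw [Finset.card_insert_of_notMem (by simp [hcd]), Finset.card_singleton]
    have c5 : ({a, c, d} : Finset ℕ).card = 3 := by
      rw [Finset.card_insert_of_notMem (by simp [hac, had]),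
        Finset.card_insert_of_notMem (by simp [hcd]), Finset.card_singleton]
    have c6 : ({b, c, d} : Finset ℕ).card = 3 := by
      rw [Finset.card_insert_of_notMem (by simp [hbc, hbd]),
        Finset.card_insert_of_notMem (by simp [hcd]), Finset.card_singleton]
    have ne1 : ({a, b, c} : Finset ℕ) ≠ {a, b, d} := by
      intro h
      have : c ∈ ({a, b, d} : Finset ℕ) := h ▸ (by simp)
      simp at this; omega
    have ne2 : ({a, c, d} : Finset ℕ) ≠ {b, c, d} := by
      intro h
      have : a ∈ ({b, c, d} : Finset ℕ) := h ▸ (by simp)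
      simp at this; omega
    have ne3 : ({a, b} : Finset ℕ) ≠ {a, b, c} := by
      intro h; rw [Finset.ext_iff] at h; have := (h c).2 (by simp); simp at this; omega
    have ne4 : ({a, b} : Finset ℕ) ≠ {a, b, d} := by
      intro h; rw [Finset.ext_iff] at h; have := (h d).2 (by simp); simp at this; omega
    have ne5 : ({c, d} : Finset ℕ) ≠ {a, c, d} := by
      intro h; rw [Finset.ext_iff] at h; have := (h a).2 (by simp); simp at this; omega
    have ne6 : ({c, d} : Finset ℕ) ≠ {b, c, d} := by
      intro h; rw [Finset.ext_iff] at h; have := (h b).2 (by simp); simp at this; omega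
    have hSsub : ({{a, b}, {a, b, c}, {a, b, d}} : Finset (Finset ℕ)) ⊆ K := by
      intro X hX; simp at hX; rcases hX with rfl | rfl | rfl <;> assumption
    have hdisj : Disjoint (K \ {{a, b}, {a, b, c}, {a, b, d}})
        ({{c, d}, {a, c, d}, {b, c, d}} : Finset (Finset ℕ)) := by
      rw [Finset.disjoint_right]
      intro X hXT hXL
      have hXK : X ∈ K := (Finset.mem_sdiff.1 hXL).1
      simp only [Finset.mem_insert, Finset.mem_singleton] at hXT
      rcases hXT with rfl | rfl | rfl
      · exact hnew hXK
      · exact hacdK hXK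
      · exact hbcdK hXK
    have hsd : (K \ {{a, b}, {a, b, c}, {a, b, d}}).filter (fun F => F.card = i + 1)
        = K.filter (fun F => F.card = i + 1)
          \ (({{a, b}, {a, b, c}, {a, b, d}} : Finset (Finset ℕ)).filter
              (fun F => F.card = i + 1)) := by
      ext X; simp only [Finset.mem_sdiff, Finset.mem_filter]; tauto
    have hSfsub : (({{a, b}, {a, b, c}, {a, b, d}} : Finset (Finset ℕ)).filter
          (fun F => F.card = i + 1))
        ⊆ K.filter (fun F => F.card = i + 1) :=
      Finset.filter_subset_filter _ hSsub
    have hcards : (({{a, b}, {a, b, c}, {a, b, d}} : Finset (Finset ℕ)).filter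
          (fun F => F.card = i + 1)).card
        = (({{c, d}, {a, c, d}, {b, c, d}} : Finset (Finset ℕ)).filter
          (fun F => F.card = i + 1)).card := by
      rcases i with _ | _ | _ | i <;>
        simp [Finset.filter_insert, Finset.filter_singleton, c1, c2, c3, c4, c5, c6,
          ne1, ne2, ne3, ne4, ne5, ne6, Finset.card_insert_of_notMem]
    unfold fVec
    rw [Finset.filter_union,
      Finset.card_union_of_disjoint (Finset.disjoint_filter_filter hdisj), hsd,
      Finset.card_sdiff_of_subset hSfsub, hcards]
    have hle := Finset.card_le_card hSfsub
    omega
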